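/- arXiv:2112.08851 — 2 statements merged into one kernel-verified Lean document; each statement's English description precedes it below -/
import Mathlib

section
/- Let 𝒦 ∈ [0, C] be a fixed average set size and let η̂ : 𝒳 → ℝ^C be a measurable estimator with η̂_k(x) ≥ 0 and ∑_k η̂_k(x) = 1. Let 𝒮̂_𝒦 be the average-𝒦 plug-in classifier built from η̂ (thresholding η̂ at λ̂ = G_{η̂}^{-1}(𝒦), with measurable tie-breaking so that ℐ(𝒮̂_𝒦) = 𝒦); assume such a classifier exists. Then ℰ(𝒮̂_𝒦) − ℰ(𝒮_𝒦^*) ≤ ∫ ∑_{k=1}^C |η_k(x) − η̂_k(x)| dμ(x). -/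
open MeasureTheory Finset

/-- Error rate of a set-valued classifier: `ℰ(S) = ∫ (1 − ∑_{k∈S(x)} η_k(x)) dμ(x)`. -/
noncomputable def errRate {𝒳 : Type*} [MeasurableSpace 𝒳] (μ : Measure 𝒳) {C : ℕ}
    (η : 𝒳 → Fin C → ℝ) (S : 𝒳 → Finset (Fin C)) : ℝ :=
  ∫ x, (1 - ∑ k ∈ S x, η x k) ∂μ

/-- Average set size of a set-valued classifier: `ℐ(S) = ∫ |S(x)| dμ(x)`. -/
noncomputable def avgSize {𝒳 : Type*} [MeasurableSpace 𝒳] (μ : Measure 𝒳) {C : ℕ}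
    (S : 𝒳 → Finset (Fin C)) : ℝ :=
  ∫ x, ((S x).card : ℝ) ∂μ

/-- `G_η(λ) = ∑_{k=1}^C μ{x : η_k(x) > λ}`. -/
noncomputable def Gfun {𝒳 : Type*} [MeasurableSpace 𝒳] (μ : Measure 𝒳) {C : ℕ}
    (η : 𝒳 → Fin C → ℝ) (lam : ℝ) : ℝ :=
  ∑ k : Fin C, (μ {x | lam < η x k}).toReal

/-- `λ_𝒦 = min {λ ∈ [0,1] : G_η(λ) ≤ 𝒦}` (as an infimum). -/
noncomputable def lamThresh {𝒳 : Type*} [MeasurableSpace 𝒳] (μ : Measure 𝒳) {C : ℕ}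
    (η : 𝒳 → Fin C → ℝ) (K : ℝ) : ℝ :=
  sInf {lam : ℝ | lam ∈ Set.Icc (0 : ℝ) 1 ∧ Gfun μ η lam ≤ K}

/-- `𝒮_𝒦^+(x) = {k : η_k(x) > λ_𝒦}`. -/
noncomputable def Splus {𝒳 : Type*} [MeasurableSpace 𝒳] (μ : Measure 𝒳) {C : ℕ}
    (η : 𝒳 → Fin C → ℝ) (K : ℝ) : 𝒳 → Finset (Fin C) :=
  fun x => Finset.univ.filter (fun k => lamThresh μ η K < η x k)


section Aux

variable {𝒳 : Type*} [MeasurableSpace 𝒳]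

lemma sum_mem_eq {C : ℕ} (A : Finset (Fin C)) (f : Fin C → ℝ) :
    ∑ k ∈ A, f k = ∑ k : Fin C, if k ∈ A then f k else 0 := by
  rw [Finset.sum_ite_mem, Finset.univ_inter]

lemma card_eq_sum_ite {C : ℕ} (A : Finset (Fin C)) :
    ((A.card : ℝ)) = ∑ k : Fin C, if k ∈ A then (1 : ℝ) else 0 := by
  rw [Finset.sum_ite_mem, Finset.univ_inter]
  simp

lemma integrable_indSum (μ : Measure 𝒳) [IsProbabilityMeasure μ] {C : ℕ}
    (f : 𝒳 → Fin C → ℝ) (hf : ∀ k, Measurable fun x => f x k)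
    (hb : ∀ x k, |f x k| ≤ 1)
    (S : 𝒳 → Finset (Fin C)) (hS : ∀ k, MeasurableSet {x | k ∈ S x}) :
    Integrable (fun x => ∑ k ∈ S x, f x k) μ := by
  have heq : (fun x => ∑ k ∈ S x, f x k)
      = fun x => ∑ k : Fin C, Set.indicator {x | k ∈ S x} (fun x => f x k) x := by
    funext x
    rw [sum_mem_eq]
    refine Finset.sum_congr rfl fun k _ => ?_
    by_cases h : k ∈ S x <;> simp [Set.indicator, h]
  rw [heq]
  refine integrable_finset_sum _ fun k _ => ?_
  have hm : Measurable (Set.indicator {x | k ∈ S x} (fun x => f x k)) :=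
    (hf k).indicator (hS k)
  refine (integrable_const (1 : ℝ)).mono' hm.aestronglyMeasurable (ae_of_all _ fun x => ?_)
  rw [Real.norm_eq_abs]
  by_cases h : x ∈ {x | k ∈ S x} <;> simp [Set.indicator, h]
  exact hb x k

end Aux

/-- Thm. on average-𝒦 plug-in regret: for a measurable estimator `ηh` (η̂)
with values in the simplex, the average-𝒦 plug-in classifier (thresholding `ηh` at
`λ̂ = G_{η̂}^{-1}(𝒦)` with measurable tie-breaking so its average size is `𝒦`) satisfies
`ℰ(𝒮̂_𝒦) − ℰ(𝒮_𝒦^*) ≤ ∫ ∑_k |η_k(x) − η̂_k(x)| dμ(x)`. -/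
theorem stmt_11 {𝒳 : Type*} [MeasurableSpace 𝒳] (μ : Measure 𝒳) [IsProbabilityMeasure μ]
    {C : ℕ} (η : 𝒳 → Fin C → ℝ)
    (hη : ∀ k, Measurable fun x => η x k)
    (hη0 : ∀ x k, 0 ≤ η x k) (hη1 : ∀ x, ∑ k, η x k = 1)
    (𝒦 : ℝ) (h𝒦 : 𝒦 ∈ Set.Icc (0 : ℝ) (C : ℝ))
    -- measurable estimator of the conditional probabilities
    (ηh : 𝒳 → Fin C → ℝ)
    (hηh : ∀ k, Measurable fun x => ηh x k)
    (hηh0 : ∀ x k, 0 ≤ ηh x k) (hηh1 : ∀ x, ∑ k, ηh x k = 1)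
    -- the tie-breaking part of the optimal average-𝒦 classifier for η, assumed to exist
    (T : 𝒳 → Finset (Fin C))
    (hT_meas : ∀ k, MeasurableSet {x | k ∈ T x})
    (hT_tie : ∀ x, ∀ k ∈ T x, η x k = lamThresh μ η 𝒦)
    (hT_size : avgSize μ (fun x => Splus μ η 𝒦 x ∪ T x) = 𝒦)
    -- the tie-breaking part of the plug-in classifier built from ηh, assumed to exist
    (That : 𝒳 → Finset (Fin C))
    (hThat_meas : ∀ k, MeasurableSet {x | k ∈ That x})
    (hThat_tie : ∀ x, ∀ k ∈ That x, ηh x k = lamThresh μ ηh 𝒦)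
    (hThat_size : avgSize μ (fun x => Splus μ ηh 𝒦 x ∪ That x) = 𝒦) :
    errRate μ η (fun x => Splus μ ηh 𝒦 x ∪ That x)
        - errRate μ η (fun x => Splus μ η 𝒦 x ∪ T x)
      ≤ ∫ x, ∑ k : Fin C, |η x k - ηh x k| ∂μ := by
  classical
  set lamh := lamThresh μ ηh 𝒦 with hlamh
  set Sh : 𝒳 → Finset (Fin C) := fun x => Splus μ ηh 𝒦 x ∪ That x with hSh
  set Ss : 𝒳 → Finset (Fin C) := fun x => Splus μ η 𝒦 x ∪ T x with hSs
  have hη_abs : ∀ x k, |η x k| ≤ 1 := by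
    intro x k
    rw [abs_of_nonneg (hη0 x k)]
    calc η x k ≤ ∑ j, η x j := Finset.single_le_sum (fun j _ => hη0 x j) (Finset.mem_univ k)
    _ = 1 := hη1 x
  have hηh_abs : ∀ x k, |ηh x k| ≤ 1 := by
    intro x k
    rw [abs_of_nonneg (hηh0 x k)]
    calc ηh x k ≤ ∑ j, ηh x j := Finset.single_le_sum (fun j _ => hηh0 x j) (Finset.mem_univ k)
    _ = 1 := hηh1 x
  have hSh_meas : ∀ k, MeasurableSet {x | k ∈ Sh x} := by
    intro k
    have : {x | k ∈ Sh x} = {x | lamh < ηh x k} ∪ {x | k ∈ That x} := by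
      ext x; simp [hSh, Splus, Finset.mem_union, Finset.mem_filter, hlamh]
    rw [this]
    exact (measurableSet_lt measurable_const (hηh k)).union (hThat_meas k)
  have hSs_meas : ∀ k, MeasurableSet {x | k ∈ Ss x} := by
    intro k
    have : {x | k ∈ Ss x} = {x | lamThresh μ η 𝒦 < η x k} ∪ {x | k ∈ T x} := by
      ext x; simp [hSs, Splus, Finset.mem_union, Finset.mem_filter]
    rw [this]
    exact (measurableSet_lt measurable_const (hη k)).union (hT_meas k)
  have one_abs : ∀ x : 𝒳, ∀ k : Fin C, |(1 : ℝ)| ≤ 1 := fun _ _ => by simp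
  have hF : Integrable (fun x => ∑ k ∈ Ss x, η x k) μ :=
    integrable_indSum μ η hη hη_abs Ss hSs_meas
  have hG : Integrable (fun x => ∑ k ∈ Sh x, η x k) μ :=
    integrable_indSum μ η hη hη_abs Sh hSh_meas
  have hP : Integrable (fun x => ((Ss x).card : ℝ)) μ := by
    have := integrable_indSum μ (fun _ _ => (1 : ℝ)) (fun _ => measurable_const) one_abs Ss hSs_meas
    simpa using this
  have hQ : Integrable (fun x => ((Sh x).card : ℝ)) μ := by
    have := integrable_indSum μ (fun _ _ => (1 : ℝ)) (fun _ => measurable_const) one_abs Sh hSh_meas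
    simpa using this
  have hR : Integrable (fun x => ∑ k : Fin C, |η x k - ηh x k|) μ := by
    have hm : Measurable fun x => ∑ k : Fin C, |η x k - ηh x k| :=
      Finset.measurable_sum _ fun k _ => ((hη k).sub (hηh k)).abs
    refine (integrable_const (2 * (C : ℝ))).mono' hm.aestronglyMeasurable
      (ae_of_all _ fun x => ?_)
    rw [Real.norm_eq_abs, abs_of_nonneg (Finset.sum_nonneg fun k _ => abs_nonneg _)]
    calc ∑ k : Fin C, |η x k - ηh x k| ≤ ∑ _k : Fin C, (2 : ℝ) := by
          refine Finset.sum_le_sum fun k _ => ?_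
          have h1 := hη_abs x k
          have h2 := hηh_abs x k
          have h3 : |η x k - ηh x k| ≤ |η x k| + |ηh x k| := abs_sub _ _
          linarith
    _ = 2 * (C : ℝ) := by simp [mul_comm]
  -- pointwise inequality
  have hpt : ∀ x, (∑ k ∈ Ss x, η x k) - (∑ k ∈ Sh x, η x k)
      - lamh * (((Ss x).card : ℝ) - ((Sh x).card : ℝ))
      ≤ ∑ k : Fin C, |η x k - ηh x k| := by
    intro x
    have key : ∀ k : Fin C,
        (if k ∈ Ss x then η x k else 0) - (if k ∈ Sh x then η x k else 0)
          - lamh * ((if k ∈ Ss x then (1 : ℝ) else 0) - (if k ∈ Sh x then (1 : ℝ) else 0))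
        ≤ |η x k - ηh x k| := by
      intro k
      have hmem : k ∈ Sh x → lamh ≤ ηh x k := by
        intro h
        simp only [hSh, Splus, Finset.mem_union, Finset.mem_filter, Finset.mem_univ,
          true_and] at h
        rcases h with h | h
        · exact le_of_lt h
        · exact le_of_eq (hThat_tie x k h).symm
      have hnmem : k ∉ Sh x → ηh x k ≤ lamh := by
        intro h
        simp only [hSh, Splus, Finset.mem_union, Finset.mem_filter, Finset.mem_univ,
          true_and, not_or, not_lt] at h
        exact h.1
      by_cases hs : k ∈ Ss x <;> by_cases hh : k ∈ Sh x <;> simp only [hs, hh, if_pos, if_neg,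
        if_true, if_false]
      · have := abs_nonneg (η x k - ηh x k); linarith
      · have h1 := hnmem hh
        have h2 := le_abs_self (η x k - ηh x k)
        linarith
      · have h1 := hmem hh
        have h2 := neg_abs_le (η x k - ηh x k)
        linarith
      · have := abs_nonneg (η x k - ηh x k); linarith
    calc (∑ k ∈ Ss x, η x k) - (∑ k ∈ Sh x, η x k)
          - lamh * (((Ss x).card : ℝ) - ((Sh x).card : ℝ))
        = ∑ k : Fin C, ((if k ∈ Ss x then η x k else 0) - (if k ∈ Sh x then η x k else 0)
            - lamh * ((if k ∈ Ss x then (1 : ℝ) else 0) - (if k ∈ Sh x then (1 : ℝ) else 0))) := by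
          rw [sum_mem_eq (Ss x) (η x), sum_mem_eq (Sh x) (η x), card_eq_sum_ite (Ss x),
            card_eq_sum_ite (Sh x)]
          simp only [← Finset.sum_sub_distrib, Finset.mul_sum]
    _ ≤ ∑ k : Fin C, |η x k - ηh x k| := Finset.sum_le_sum fun k _ => key k
  have hsize1 : ∫ x, ((Ss x).card : ℝ) ∂μ = 𝒦 := hT_size
  have hsize2 : ∫ x, ((Sh x).card : ℝ) ∂μ = 𝒦 := hThat_size
  have step1 : errRate μ η Sh - errRate μ η Ss
      = ∫ x, ((∑ k ∈ Ss x, η x k) - (∑ k ∈ Sh x, η x k)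
          - lamh * (((Ss x).card : ℝ) - ((Sh x).card : ℝ))) ∂μ := by
    have hFG : Integrable (fun x => (∑ k ∈ Ss x, η x k) - ∑ k ∈ Sh x, η x k) μ := by
      exact hF.sub hG
    have hPQ : Integrable (fun x => lamh * (((Ss x).card : ℝ) - ((Sh x).card : ℝ))) μ := by
      simpa using (hP.sub hQ).const_mul lamh
    unfold errRate
    rw [integral_sub (integrable_const 1) hG, integral_sub (integrable_const 1) hF,
      integral_sub hFG hPQ, integral_sub hF hG,
      integral_const_mul, integral_sub hP hQ, hsize1, hsize2]
    ring
  rw [step1]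
  have hL : Integrable (fun x => (∑ k ∈ Ss x, η x k) - (∑ k ∈ Sh x, η x k)
      - lamh * (((Ss x).card : ℝ) - ((Sh x).card : ℝ))) μ := by
    exact (hF.sub hG).sub ((hP.sub hQ).const_mul lamh)
  exact integral_mono hL hR hpt
end

section
/- Every strongly proper loss is consistent for average-𝒦 classification: if l is a μ₀-strongly proper loss and (η̂_n) is a sequence of measurable estimators η̂_n : 𝒳 → Δ_C with surrogate regret Reg_l(η̂_n) = ∫ [L_l(η(x), η̂_n(x)) − L_l(η(x), η(x))] dμ(x) tending to 0, then the error of the average-𝒦 plug-in classifiers 𝒮̂_{𝒦,n} built from η̂_n (assumed to exist for each n) converges to the optimal average-𝒦 error: ℰ(𝒮̂_{𝒦,n}) − ℰ(𝒮_𝒦^*) → 0. -/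
open MeasureTheory Finset

/-- The probability simplex `Δ_C = {p ∈ ℝ^C : p_k ≥ 0, ∑_k p_k = 1}`. -/
def simplex (C : ℕ) : Set (Fin C → ℝ) := {p | (∀ k, 0 ≤ p k) ∧ ∑ k, p k = 1}

/-- Conditional risk `L_l(p, q) = ∑_k p_k l(k, q)` of a loss `l`. -/
noncomputable def condRisk {C : ℕ} (l : Fin C → (Fin C → ℝ) → ℝ) (p q : Fin C → ℝ) : ℝ :=
  ∑ k, p k * l k q

/-- A loss is `μ₀`-strongly proper if
`L_l(p,q) − L_l(p,p) ≥ (μ₀/2) ‖p − q‖₁²` for all `p, q` in the simplex. -/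
def StronglyProper {C : ℕ} (μ₀ : ℝ) (l : Fin C → (Fin C → ℝ) → ℝ) : Prop :=
  ∀ p ∈ simplex C, ∀ q ∈ simplex C,
    condRisk l p q - condRisk l p p ≥ μ₀ / 2 * (∑ k, |p k - q k|) ^ 2

/- ### Auxiliary lemmas -/

lemma optSum_ge {C : ℕ} (p : Fin C → ℝ) (lam : ℝ) (A B : Finset (Fin C))
    (hA1 : ∀ k ∈ A, lam ≤ p k) (hA2 : ∀ k, k ∉ A → p k ≤ lam) :
    ∑ k ∈ B, p k - lam * B.card ≤ ∑ k ∈ A, p k - lam * A.card := by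
  have h3 : ∑ k ∈ A \ B, (p k - lam) - ∑ k ∈ B \ A, (p k - lam)
      = ∑ k ∈ A, (p k - lam) - ∑ k ∈ B, (p k - lam) :=
    Finset.sum_sdiff_sub_sum_sdiff
  have h1 : (0:ℝ) ≤ ∑ k ∈ A \ B, (p k - lam) :=
    Finset.sum_nonneg fun k hk => sub_nonneg.2 (hA1 k (Finset.mem_sdiff.1 hk).1)
  have h2 : ∑ k ∈ B \ A, (p k - lam) ≤ 0 :=
    Finset.sum_nonpos fun k hk => sub_nonpos.2 (hA2 k (Finset.mem_sdiff.1 hk).2)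
  have hA : ∑ k ∈ A, (p k - lam) = ∑ k ∈ A, p k - lam * A.card := by
    rw [Finset.sum_sub_distrib, Finset.sum_const, nsmul_eq_mul, mul_comm]
  have hB : ∑ k ∈ B, (p k - lam) = ∑ k ∈ B, p k - lam * B.card := by
    rw [Finset.sum_sub_distrib, Finset.sum_const, nsmul_eq_mul, mul_comm]
  linarith

lemma sum_diff_le_abs {C : ℕ} (d : Fin C → ℝ) (A B : Finset (Fin C)) :
    ∑ k ∈ A, d k - ∑ k ∈ B, d k ≤ ∑ k : Fin C, |d k| := by
  have h3 : ∑ k ∈ A \ B, d k - ∑ k ∈ B \ A, d k = ∑ k ∈ A, d k - ∑ k ∈ B, d k :=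
    Finset.sum_sdiff_sub_sum_sdiff
  have h1 : ∑ k ∈ A \ B, d k ≤ ∑ k ∈ A \ B, |d k| :=
    Finset.sum_le_sum fun k _ => le_abs_self _
  have h2 : -∑ k ∈ B \ A, d k ≤ ∑ k ∈ B \ A, |d k| := by
    rw [← Finset.sum_neg_distrib]
    exact Finset.sum_le_sum fun k _ => neg_le_abs _
  have h4 : ∑ k ∈ A \ B, |d k| + ∑ k ∈ B \ A, |d k| ≤ ∑ k : Fin C, |d k| := by
    rw [← Finset.sum_union (disjoint_sdiff_sdiff)]
    exact Finset.sum_le_sum_of_subset_of_nonneg (Finset.subset_univ _)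
      (fun k _ _ => abs_nonneg _)
  linarith

lemma integrable_of_bdd {𝒳 : Type*} [MeasurableSpace 𝒳] {μ : Measure 𝒳} [IsFiniteMeasure μ]
    {f : 𝒳 → ℝ} (hf : Measurable f) {B : ℝ} (hb : ∀ x, |f x| ≤ B) : Integrable f μ :=
  ⟨hf.aestronglyMeasurable,
    HasFiniteIntegral.of_bounded (C := B) (Filter.Eventually.of_forall fun x => by
      simpa using hb x)⟩

lemma selSum_eq {𝒳 : Type*} {C : ℕ} (η : 𝒳 → Fin C → ℝ) (S : 𝒳 → Finset (Fin C)) (x : 𝒳) :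
    ∑ k ∈ S x, η x k = ∑ k : Fin C, Set.indicator {x | k ∈ S x} (fun x => η x k) x := by
  classical
  symm
  simp only [Set.indicator_apply, Set.mem_setOf_eq]
  rw [Finset.sum_ite_mem, Finset.univ_inter]

lemma integrable_selSum {𝒳 : Type*} [MeasurableSpace 𝒳] (μ : Measure 𝒳) [IsFiniteMeasure μ]
    {C : ℕ} (η : 𝒳 → Fin C → ℝ) (hη : ∀ k, Measurable fun x => η x k)
    (hb : ∀ x k, |η x k| ≤ 1)
    (S : 𝒳 → Finset (Fin C)) (hS : ∀ k, MeasurableSet {x | k ∈ S x}) :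
    Integrable (fun x => ∑ k ∈ S x, η x k) μ := by
  have heq : (fun x => ∑ k ∈ S x, η x k)
      = fun x => ∑ k : Fin C, Set.indicator {x | k ∈ S x} (fun x => η x k) x := by
    funext x; exact selSum_eq η S x
  rw [heq]
  exact integrable_finset_sum _ fun k _ =>
    (integrable_of_bdd (hη k) (fun x => hb x k)).indicator (hS k)

lemma integrable_card {𝒳 : Type*} [MeasurableSpace 𝒳] (μ : Measure 𝒳) [IsFiniteMeasure μ]
    {C : ℕ} (S : 𝒳 → Finset (Fin C)) (hS : ∀ k, MeasurableSet {x | k ∈ S x}) :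
    Integrable (fun x => ((S x).card : ℝ)) μ := by
  have := integrable_selSum μ (fun _ _ => (1:ℝ)) (fun _ => measurable_const)
    (fun _ _ => by norm_num) S hS
  simpa [Finset.sum_const, nsmul_eq_mul] using this

lemma simplex_abs_le_one {C : ℕ} {p : Fin C → ℝ} (hp : p ∈ simplex C) (k : Fin C) :
    |p k| ≤ 1 := by
  rw [abs_of_nonneg (hp.1 k)]
  calc p k ≤ ∑ j, p j := Finset.single_le_sum (fun j _ => hp.1 j) (Finset.mem_univ k)
  _ = 1 := hp.2

lemma simplex_l1_le_two {C : ℕ} {p q : Fin C → ℝ} (hp : p ∈ simplex C) (hq : q ∈ simplex C) :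
    ∑ k, |p k - q k| ≤ 2 := by
  have h : ∀ k : Fin C, |p k - q k| ≤ p k + q k := fun k =>
    (abs_sub _ _).trans (by rw [abs_of_nonneg (hp.1 k), abs_of_nonneg (hq.1 k)])
  calc ∑ k, |p k - q k| ≤ ∑ k, (p k + q k) := Finset.sum_le_sum fun k _ => h k
  _ = 2 := by rw [Finset.sum_add_distrib, hp.2, hq.2]; norm_num

/-- Main deterministic bound: the excess error of the plug-in classifier built from `η'`
is between `0` and the integrated `ℓ¹` distance between `η` and `η'`. -/
lemma errdiff_bounds {𝒳 : Type*} [MeasurableSpace 𝒳] (μ : Measure 𝒳) [IsProbabilityMeasure μ]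
    {C : ℕ} (η η' : 𝒳 → Fin C → ℝ)
    (hη : ∀ k, Measurable fun x => η x k) (hηΔ : ∀ x, η x ∈ simplex C)
    (hη' : ∀ k, Measurable fun x => η' x k) (hη'Δ : ∀ x, η' x ∈ simplex C)
    (𝒦 : ℝ)
    (T : 𝒳 → Finset (Fin C)) (hT_meas : ∀ k, MeasurableSet {x | k ∈ T x})
    (hT_tie : ∀ x, ∀ k ∈ T x, η x k = lamThresh μ η 𝒦)
    (hT_size : avgSize μ (fun x => Splus μ η 𝒦 x ∪ T x) = 𝒦)
    (T' : 𝒳 → Finset (Fin C)) (hT'_meas : ∀ k, MeasurableSet {x | k ∈ T' x})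
    (hT'_tie : ∀ x, ∀ k ∈ T' x, η' x k = lamThresh μ η' 𝒦)
    (hT'_size : avgSize μ (fun x => Splus μ η' 𝒦 x ∪ T' x) = 𝒦) :
    0 ≤ errRate μ η (fun x => Splus μ η' 𝒦 x ∪ T' x) -
        errRate μ η (fun x => Splus μ η 𝒦 x ∪ T x) ∧
    errRate μ η (fun x => Splus μ η' 𝒦 x ∪ T' x) -
        errRate μ η (fun x => Splus μ η 𝒦 x ∪ T x) ≤ ∫ x, ∑ k, |η x k - η' x k| ∂μ := by
  classical
  have hmem : ∀ (ζ : 𝒳 → Fin C → ℝ) (x : 𝒳) (k : Fin C),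
      k ∈ Splus μ ζ 𝒦 x ↔ lamThresh μ ζ 𝒦 < ζ x k := by
    intro ζ x k; simp [Splus]
  have hAin : ∀ x, ∀ k ∈ Splus μ η 𝒦 x ∪ T x, lamThresh μ η 𝒦 ≤ η x k := by
    intro x k hk
    rcases Finset.mem_union.1 hk with h | h
    · exact le_of_lt ((hmem η x k).1 h)
    · exact le_of_eq (hT_tie x k h).symm
  have hAout : ∀ (x : 𝒳) (k : Fin C), k ∉ Splus μ η 𝒦 x ∪ T x → η x k ≤ lamThresh μ η 𝒦 := by
    intro x k hk
    exact le_of_not_gt fun h => hk (Finset.mem_union_left _ ((hmem η x k).2 h))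
  have hBin : ∀ x, ∀ k ∈ Splus μ η' 𝒦 x ∪ T' x, lamThresh μ η' 𝒦 ≤ η' x k := by
    intro x k hk
    rcases Finset.mem_union.1 hk with h | h
    · exact le_of_lt ((hmem η' x k).1 h)
    · exact le_of_eq (hT'_tie x k h).symm
  have hBout : ∀ (x : 𝒳) (k : Fin C), k ∉ Splus μ η' 𝒦 x ∪ T' x → η' x k ≤ lamThresh μ η' 𝒦 := by
    intro x k hk
    exact le_of_not_gt fun h => hk (Finset.mem_union_left _ ((hmem η' x k).2 h))
  have hAmeas : ∀ k : Fin C, MeasurableSet {x | k ∈ Splus μ η 𝒦 x ∪ T x} := by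
    intro k
    have : {x | k ∈ Splus μ η 𝒦 x ∪ T x}
        = {x | lamThresh μ η 𝒦 < η x k} ∪ {x | k ∈ T x} := by
      ext x; simp [Finset.mem_union, hmem η x k]
    rw [this]
    exact (measurableSet_lt measurable_const (hη k)).union (hT_meas k)
  have hBmeas : ∀ k : Fin C, MeasurableSet {x | k ∈ Splus μ η' 𝒦 x ∪ T' x} := by
    intro k
    have : {x | k ∈ Splus μ η' 𝒦 x ∪ T' x}
        = {x | lamThresh μ η' 𝒦 < η' x k} ∪ {x | k ∈ T' x} := by
      ext x; simp [Finset.mem_union, hmem η' x k]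
    rw [this]
    exact (measurableSet_lt measurable_const (hη' k)).union (hT'_meas k)
  have habs1 : ∀ (x : 𝒳) (k : Fin C), |η x k| ≤ 1 := fun x k => simplex_abs_le_one (hηΔ x) k
  have habs1' : ∀ (x : 𝒳) (k : Fin C), |η' x k| ≤ 1 := fun x k => simplex_abs_le_one (hη'Δ x) k
  have hgA : Integrable (fun x => ∑ k ∈ Splus μ η 𝒦 x ∪ T x, η x k) μ :=
    integrable_selSum μ η hη habs1 _ hAmeas
  have hgB : Integrable (fun x => ∑ k ∈ Splus μ η' 𝒦 x ∪ T' x, η x k) μ :=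
    integrable_selSum μ η hη habs1 _ hBmeas
  have hg'A : Integrable (fun x => ∑ k ∈ Splus μ η 𝒦 x ∪ T x, η' x k) μ :=
    integrable_selSum μ η' hη' habs1' _ hAmeas
  have hg'B : Integrable (fun x => ∑ k ∈ Splus μ η' 𝒦 x ∪ T' x, η' x k) μ :=
    integrable_selSum μ η' hη' habs1' _ hBmeas
  have hcA : Integrable (fun x => (((Splus μ η 𝒦 x ∪ T x)).card : ℝ)) μ :=
    integrable_card μ _ hAmeas
  have hcB : Integrable (fun x => (((Splus μ η' 𝒦 x ∪ T' x)).card : ℝ)) μ :=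
    integrable_card μ _ hBmeas
  have htm : Measurable (fun x => ∑ k, |η x k - η' x k|) :=
    Finset.measurable_sum _ fun k _ => ((hη k).sub (hη' k)).abs
  have htb : ∀ x, abs (∑ k, |η x k - η' x k|) ≤ 2 := fun x => by
    rw [abs_of_nonneg (Finset.sum_nonneg fun k _ => abs_nonneg _)]
    exact simplex_l1_le_two (hηΔ x) (hη'Δ x)
  have htint : Integrable (fun x => ∑ k, |η x k - η' x k|) μ := integrable_of_bdd htm htb
  have hcAint : ∫ x, (((Splus μ η 𝒦 x ∪ T x)).card : ℝ) ∂μ = 𝒦 := hT_size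
  have hcBint : ∫ x, (((Splus μ η' 𝒦 x ∪ T' x)).card : ℝ) ∂μ = 𝒦 := hT'_size
  have herr : errRate μ η (fun x => Splus μ η' 𝒦 x ∪ T' x) -
      errRate μ η (fun x => Splus μ η 𝒦 x ∪ T x)
      = ∫ x, (∑ k ∈ Splus μ η 𝒦 x ∪ T x, η x k
          - ∑ k ∈ Splus μ η' 𝒦 x ∪ T' x, η x k) ∂μ := by
    simp only [errRate]
    rw [integral_sub (integrable_const _) hgB, integral_sub (integrable_const _) hgA,
      integral_sub hgA hgB]
    ring
  constructor
  · rw [herr]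
    have key : ∫ x, (lamThresh μ η 𝒦 * ((((Splus μ η 𝒦 x ∪ T x)).card : ℝ)
        - (((Splus μ η' 𝒦 x ∪ T' x)).card : ℝ))) ∂μ = 0 := by
      rw [integral_const_mul, integral_sub hcA hcB, hcAint, hcBint]; ring
    have hpt : ∀ x, lamThresh μ η 𝒦 * ((((Splus μ η 𝒦 x ∪ T x)).card : ℝ)
        - (((Splus μ η' 𝒦 x ∪ T' x)).card : ℝ))
        ≤ ∑ k ∈ Splus μ η 𝒦 x ∪ T x, η x k - ∑ k ∈ Splus μ η' 𝒦 x ∪ T' x, η x k := by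
      intro x
      have h := optSum_ge (η x) (lamThresh μ η 𝒦) (Splus μ η 𝒦 x ∪ T x)
        (Splus μ η' 𝒦 x ∪ T' x) (hAin x) (hAout x)
      rw [mul_sub]; linarith
    have hI1 : Integrable (fun x => lamThresh μ η 𝒦 * ((((Splus μ η 𝒦 x ∪ T x)).card : ℝ)
        - (((Splus μ η' 𝒦 x ∪ T' x)).card : ℝ))) μ := (hcA.sub hcB).const_mul _
    have hI2 : Integrable (fun x => ∑ k ∈ Splus μ η 𝒦 x ∪ T x, η x k
        - ∑ k ∈ Splus μ η' 𝒦 x ∪ T' x, η x k) μ := hgA.sub hgB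
    have hmono := integral_mono hI1 hI2 hpt
    rw [key] at hmono
    exact hmono
  · rw [herr]
    have hpt : ∀ x, ∑ k ∈ Splus μ η 𝒦 x ∪ T x, η x k - ∑ k ∈ Splus μ η' 𝒦 x ∪ T' x, η x k
        ≤ lamThresh μ η' 𝒦 * ((((Splus μ η 𝒦 x ∪ T x)).card : ℝ)
          - (((Splus μ η' 𝒦 x ∪ T' x)).card : ℝ)) + ∑ k, |η x k - η' x k| := by
      intro x
      have hopt := optSum_ge (η' x) (lamThresh μ η' 𝒦) (Splus μ η' 𝒦 x ∪ T' x)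
        (Splus μ η 𝒦 x ∪ T x) (hBin x) (hBout x)
      have habs := sum_diff_le_abs (fun k => η x k - η' x k) (Splus μ η 𝒦 x ∪ T x)
        (Splus μ η' 𝒦 x ∪ T' x)
      rw [Finset.sum_sub_distrib, Finset.sum_sub_distrib] at habs
      rw [mul_sub]
      linarith
    have hI1 : Integrable (fun x => lamThresh μ η' 𝒦 * ((((Splus μ η 𝒦 x ∪ T x)).card : ℝ)
        - (((Splus μ η' 𝒦 x ∪ T' x)).card : ℝ))) μ := (hcA.sub hcB).const_mul _
    have hInt2 : Integrable (fun x => lamThresh μ η' 𝒦 * ((((Splus μ η 𝒦 x ∪ T x)).card : ℝ)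
        - (((Splus μ η' 𝒦 x ∪ T' x)).card : ℝ)) + ∑ k, |η x k - η' x k|) μ :=
      hI1.add htint
    have hI2 : Integrable (fun x => ∑ k ∈ Splus μ η 𝒦 x ∪ T x, η x k
        - ∑ k ∈ Splus μ η' 𝒦 x ∪ T' x, η x k) μ := hgA.sub hgB
    have hmono := integral_mono hI2 hInt2 hpt
    have key : ∫ x, (lamThresh μ η' 𝒦 * ((((Splus μ η 𝒦 x ∪ T x)).card : ℝ)
        - (((Splus μ η' 𝒦 x ∪ T' x)).card : ℝ)) + ∑ k, |η x k - η' x k|) ∂μ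
        = ∫ x, ∑ k, |η x k - η' x k| ∂μ := by
      rw [integral_add hI1 htint, integral_const_mul,
        integral_sub hcA hcB, hcAint, hcBint]
      ring
    rw [key] at hmono
    exact hmono

/-- consistency of strongly proper losses for average-𝒦 classification:
if `l` is `μ₀`-strongly proper and the surrogate regrets `Reg_l(η̂_n)` of measurable
simplex-valued estimators tend to `0`, then the error of the average-𝒦 plug-in classifiers
built from `η̂_n` (assumed to exist) converges to the optimal average-𝒦 error. -/
theorem stmt_14 {𝒳 : Type*} [MeasurableSpace 𝒳] (μ : Measure 𝒳) [IsProbabilityMeasure μ]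
    {C : ℕ} (l : Fin C → (Fin C → ℝ) → ℝ) (μ₀ : ℝ) (hμ₀ : 0 < μ₀)
    (hl : StronglyProper μ₀ l)
    (η : 𝒳 → Fin C → ℝ)
    (hη : ∀ k, Measurable fun x => η x k) (hηΔ : ∀ x, η x ∈ simplex C)
    (𝒦 : ℝ) (h𝒦 : 𝒦 ∈ Set.Icc (0 : ℝ) (C : ℝ))
    -- the sequence of estimators
    (ηh : ℕ → 𝒳 → Fin C → ℝ)
    (hηh : ∀ n k, Measurable fun x => ηh n x k) (hηhΔ : ∀ n x, ηh n x ∈ simplex C)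
    (hint : ∀ n, Integrable
      (fun x => condRisk l (η x) (ηh n x) - condRisk l (η x) (η x)) μ)
    (hreg : Filter.Tendsto
      (fun n => ∫ x, (condRisk l (η x) (ηh n x) - condRisk l (η x) (η x)) ∂μ)
      Filter.atTop (nhds 0))
    -- the tie-breaking part of the optimal average-𝒦 classifier for η, assumed to exist
    (T : 𝒳 → Finset (Fin C))
    (hT_meas : ∀ k, MeasurableSet {x | k ∈ T x})
    (hT_tie : ∀ x, ∀ k ∈ T x, η x k = lamThresh μ η 𝒦)
    (hT_size : avgSize μ (fun x => Splus μ η 𝒦 x ∪ T x) = 𝒦)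
    -- the tie-breaking parts of the plug-in classifiers built from ηh n, assumed to exist
    (That : ℕ → 𝒳 → Finset (Fin C))
    (hThat_meas : ∀ n k, MeasurableSet {x | k ∈ That n x})
    (hThat_tie : ∀ n x, ∀ k ∈ That n x, ηh n x k = lamThresh μ (ηh n) 𝒦)
    (hThat_size : ∀ n, avgSize μ (fun x => Splus μ (ηh n) 𝒦 x ∪ That n x) = 𝒦) :
    Filter.Tendsto
      (fun n => errRate μ η (fun x => Splus μ (ηh n) 𝒦 x ∪ That n x)
        - errRate μ η (fun x => Splus μ η 𝒦 x ∪ T x))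
      Filter.atTop (nhds 0) := by
  classical
  have hbounds := fun n => errdiff_bounds μ η (ηh n) hη hηΔ (hηh n) (hηhΔ n) 𝒦
    T hT_meas hT_tie hT_size (That n) (hThat_meas n) (hThat_tie n) (hThat_size n)
  set r : ℕ → ℝ := fun n => ∫ x, (condRisk l (η x) (ηh n x) - condRisk l (η x) (η x)) ∂μ
    with hrdef
  have htm : ∀ n, Measurable (fun x => ∑ k, |η x k - ηh n x k|) := fun n =>
    Finset.measurable_sum _ fun k _ => ((hη k).sub (hηh n k)).abs
  have htb : ∀ n x, abs (∑ k, |η x k - ηh n x k|) ≤ 2 := fun n x => by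
    rw [abs_of_nonneg (Finset.sum_nonneg fun k _ => abs_nonneg _)]
    exact simplex_l1_le_two (hηΔ x) (hηhΔ n x)
  have htint : ∀ n, Integrable (fun x => ∑ k, |η x k - ηh n x k|) μ := fun n =>
    integrable_of_bdd (htm n) (htb n)
  have ht2int : ∀ n, Integrable (fun x => (∑ k, |η x k - ηh n x k|) ^ 2) μ := fun n =>
    integrable_of_bdd ((htm n).pow_const 2) (fun x => by
      rw [abs_of_nonneg (sq_nonneg _), ← sq_abs]
      calc abs (∑ k, |η x k - ηh n x k|) ^ 2 ≤ 2 ^ 2 :=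
        pow_le_pow_left₀ (abs_nonneg _) (htb n x) 2
      _ ≤ 4 := by norm_num)
  have ht2nonneg : ∀ n, (0:ℝ) ≤ ∫ x, (∑ k, |η x k - ηh n x k|) ^ 2 ∂μ := fun n =>
    integral_nonneg fun x => sq_nonneg _
  have ht2le : ∀ n, ∫ x, (∑ k, |η x k - ηh n x k|) ^ 2 ∂μ ≤ 2 / μ₀ * r n := by
    intro n
    have hpt : ∀ x, μ₀ / 2 * (∑ k, |η x k - ηh n x k|) ^ 2
        ≤ condRisk l (η x) (ηh n x) - condRisk l (η x) (η x) := fun x =>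
      hl (η x) (hηΔ x) (ηh n x) (hηhΔ n x)
    have hI : Integrable (fun x => μ₀ / 2 * (∑ k, |η x k - ηh n x k|) ^ 2) μ :=
      (ht2int n).const_mul (μ₀ / 2)
    have h1 := integral_mono hI (hint n) hpt
    rw [integral_const_mul] at h1
    have h2 : (2 / μ₀) * (μ₀ / 2 * ∫ x, (∑ k, |η x k - ηh n x k|) ^ 2 ∂μ)
        = ∫ x, (∑ k, |η x k - ηh n x k|) ^ 2 ∂μ := by
      field_simp
    calc ∫ x, (∑ k, |η x k - ηh n x k|) ^ 2 ∂μ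
        = (2 / μ₀) * (μ₀ / 2 * ∫ x, (∑ k, |η x k - ηh n x k|) ^ 2 ∂μ) := h2.symm
      _ ≤ 2 / μ₀ * r n := mul_le_mul_of_nonneg_left h1 (by positivity)
  have hr0 : ∀ n, 0 ≤ r n := by
    intro n
    have h := (ht2nonneg n).trans (ht2le n)
    have hc : (0:ℝ) < 2 / μ₀ := by positivity
    exact (mul_nonneg_iff_of_pos_left hc).1 h
  have haint : ∀ n, 0 ≤ ∫ x, ∑ k, |η x k - ηh n x k| ∂μ := fun n =>
    integral_nonneg fun x => Finset.sum_nonneg fun k _ => abs_nonneg _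
  -- Cauchy–Schwarz via nonnegativity of the variance
  have hCS : ∀ n, (∫ x, ∑ k, |η x k - ηh n x k| ∂μ) ^ 2
      ≤ ∫ x, (∑ k, |η x k - ηh n x k|) ^ 2 ∂μ := by
    intro n
    set a := ∫ x, ∑ k, |η x k - ηh n x k| ∂μ with hadef
    have h0 : (0:ℝ) ≤ ∫ x, (∑ k, |η x k - ηh n x k| - a) ^ 2 ∂μ :=
      integral_nonneg fun x => sq_nonneg _
    have hexp : ∫ x, (∑ k, |η x k - ηh n x k| - a) ^ 2 ∂μ
        = ∫ x, (∑ k, |η x k - ηh n x k|) ^ 2 ∂μ - a ^ 2 := by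
      have hfun : (fun x => (∑ k, |η x k - ηh n x k| - a) ^ 2)
          = fun x => ((∑ k, |η x k - ηh n x k|) ^ 2
            - (2 * a) * (∑ k, |η x k - ηh n x k|)) + a ^ 2 := by
        funext x; ring
      have hIsub : Integrable (fun x => (∑ k, |η x k - ηh n x k|) ^ 2
          - 2 * a * (∑ k, |η x k - ηh n x k|)) μ :=
        (ht2int n).sub ((htint n).const_mul (2 * a))
      rw [hfun, integral_add hIsub (integrable_const _),
        integral_sub (ht2int n) ((htint n).const_mul (2 * a)),
        integral_const_mul, integral_const]
      simp only [measure_univ, probReal_univ, ENNReal.toReal_one, smul_eq_mul, one_mul]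
      rw [← hadef]
      ring
    linarith
  have hle : ∀ n, errRate μ η (fun x => Splus μ (ηh n) 𝒦 x ∪ That n x)
      - errRate μ η (fun x => Splus μ η 𝒦 x ∪ T x) ≤ Real.sqrt (2 / μ₀ * r n) := by
    intro n
    have h1 := (hbounds n).2
    have h2 : (∫ x, ∑ k, |η x k - ηh n x k| ∂μ) ^ 2 ≤ 2 / μ₀ * r n :=
      (hCS n).trans (ht2le n)
    have h3 : ∫ x, ∑ k, |η x k - ηh n x k| ∂μ ≤ Real.sqrt (2 / μ₀ * r n) :=
      (Real.le_sqrt (haint n) (mul_nonneg (by positivity) (hr0 n))).2 h2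
    linarith
  have h0 : ∀ n, 0 ≤ errRate μ η (fun x => Splus μ (ηh n) 𝒦 x ∪ That n x)
      - errRate μ η (fun x => Splus μ η 𝒦 x ∪ T x) := fun n => (hbounds n).1
  have hsq : Filter.Tendsto (fun n => Real.sqrt (2 / μ₀ * r n)) Filter.atTop (nhds 0) := by
    have h := hreg.const_mul (2 / μ₀)
    rw [mul_zero] at h
    have h' := h.sqrt
    rwa [Real.sqrt_zero] at h'
  exact squeeze_zero h0 hle hsq
end
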